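/- arXiv:2103.15056 — 3 statements merged into one kernel-verified Lean document; each statement's English description precedes it below -/
import Mathlib

section
/- Let r ≥ 3 be an odd integer and let ε ∈ (0,1). The function φ_r defined for z ∈ ℂ with −π/r < Re z < π + π/r by φ_r(z) = (4πi/r)·( ∫_{−∞}^{−ε} f_z(x) dx + ∫_0^π f_z(ε e^{i(π−t)})·(−i ε e^{i(π−t)}) dt + ∫_ε^∞ f_z(x) dx ), where f_z(w) = e^{(2z−π)w}/(4w·sinh(πw)·sinh(2πw/r)), is holomorphic (complex differentiable) on the open strip {z ∈ ℂ : −π/r < Re z < π + π/r}. -/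
open MeasureTheory intervalIntegral

/-- The integrand in the contour-integral definition of the quantum dilogarithm. -/
noncomputable def qdInt (r : ℕ) (z w : ℂ) : ℂ :=
  Complex.exp ((2 * z - (Real.pi : ℂ)) * w) /
    (4 * w * Complex.sinh ((Real.pi : ℂ) * w) * Complex.sinh (2 * (Real.pi : ℂ) * w / (r : ℂ)))

/-- The contour integral over `Ω = (−∞,−ε] ∪ {|x|=ε, Im x > 0} ∪ [ε,∞)`, the semicircle
being parameterized by `γ(t) = ε e^{i(π−t)}`, `t ∈ [0,π]`. -/
noncomputable def qdContour (r : ℕ) (ε : ℝ) (z : ℂ) : ℂ :=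
  (∫ x in Set.Iic (-ε), qdInt r z (x : ℂ)) +
  (∫ t in (0:ℝ)..Real.pi,
      qdInt r z ((ε : ℂ) * Complex.exp (Complex.I * ((Real.pi : ℂ) - (t : ℂ)))) *
        (-Complex.I * (ε : ℂ) * Complex.exp (Complex.I * ((Real.pi : ℂ) - (t : ℂ))))) +
  (∫ x in Set.Ici ε, qdInt r z (x : ℂ))

/-- The quantum dilogarithm `φ_r` with semicircle radius `ε`. -/
noncomputable def qdPhi (r : ℕ) (ε : ℝ) (z : ℂ) : ℂ :=
  (4 * (Real.pi : ℂ) * Complex.I / (r : ℂ)) * qdContour r ε z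

/-!
Put `s = 2z - π`. Each of the three pieces of the contour integral is then of the Laplace type
`∫ exp (s w(t)) c(t) dt`, and is holomorphic in `s` by differentiation under the integral sign.
On the two rays, `1 / (4x sinh(πx) sinh(2πx/r))` decays like `exp (-(π + 2π/r)|x|)`, which
dominates `exp (s x)` locally uniformly on `|Re s| < π + 2π/r`, i.e. on the strip. The semicircle
is compact and, as `ε < 1 ≤ r/2`, misses the zeros of the denominator.
-/

open Set Metric Real
open scoped Complex

theorem differentiableAt_integral_cexp_mul {α : Type*} [MeasurableSpace α] {μ : Measure α}
    {w c : α → ℂ} {B : α → ℝ} {s₀ : ℂ} {δ ε : ℝ} (hδ : 0 < δ) (hε : 0 < ε)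
    (hw : AEStronglyMeasurable w μ) (hc : AEStronglyMeasurable c μ)
    (hw_ge : ∀ᵐ t ∂μ, ε ≤ ‖w t‖) (hB : Integrable B μ)
    (h_bound : ∀ᵐ t ∂μ, ∀ s ∈ ball s₀ δ, ‖w t * (cexp (s * w t) * c t)‖ ≤ B t) :
    DifferentiableAt ℂ (fun s => ∫ t, cexp (s * w t) * c t ∂μ) s₀ := by
  -- `ε ≤ ‖w‖` lets the bound on the derivative also dominate the integrand at `s₀`.
  have hF_meas (s : ℂ) : AEStronglyMeasurable (fun t => cexp (s * w t) * c t) μ :=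
    (Complex.continuous_exp.comp_aestronglyMeasurable (hw.const_mul s)).mul hc
  have hF_int : Integrable (fun t => cexp (s₀ * w t) * c t) μ := by
    refine (hB.div_const ε).mono' (hF_meas s₀) ?_
    filter_upwards [hw_ge, h_bound] with t hwt hBt
    have := hBt s₀ (mem_ball_self hδ)
    rw [norm_mul] at this
    rw [le_div_iff₀ hε]
    nlinarith [norm_nonneg (cexp (s₀ * w t) * c t)]
  refine (hasDerivAt_integral_of_dominated_loc_of_deriv_le (ball_mem_nhds s₀ hδ)
    (.of_forall hF_meas) hF_int (hw.mul (hF_meas s₀)) h_bound hB ?_).2.differentiableAt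
  refine .of_forall fun t s _ => ?_
  exact (((hasDerivAt_id s).mul_const (w t)).cexp.mul_const (c t)).congr_deriv (by simp; ring)

theorem differentiable_integral_Ioc_cexp_mul {w c : ℝ → ℂ} {a b ε : ℝ} (hε : 0 < ε)
    (hw : ContinuousOn w (Icc a b)) (hc : ContinuousOn c (Icc a b))
    (hw_ge : ∀ t ∈ Icc a b, ε ≤ ‖w t‖) :
    Differentiable ℂ (fun s => ∫ t in Ioc a b, cexp (s * w t) * c t) := by
  intro s₀
  obtain ⟨Mw, hMw⟩ := isCompact_Icc.exists_bound_of_continuousOn hw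
  obtain ⟨Mc, hMc⟩ := isCompact_Icc.exists_bound_of_continuousOn hc
  have hIoc : ∀ᵐ t ∂volume.restrict (Ioc a b), t ∈ Icc a b :=
    ae_restrict_of_forall_mem measurableSet_Ioc fun t ht => Ioc_subset_Icc_self ht
  refine differentiableAt_integral_cexp_mul one_pos hε
    ((hw.mono Ioc_subset_Icc_self).aestronglyMeasurable measurableSet_Ioc)
    ((hc.mono Ioc_subset_Icc_self).aestronglyMeasurable measurableSet_Ioc)
    (hIoc.mono hw_ge) (integrableOn_const measure_Ioc_lt_top.ne
      (C := Mw * (rexp ((‖s₀‖ + 1) * Mw) * Mc))) ?_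
  filter_upwards [hIoc] with t ht s hs
  have hexp : ‖cexp (s * w t)‖ ≤ rexp ((‖s₀‖ + 1) * Mw) := by
    refine (Complex.norm_exp_le_exp_norm _).trans (Real.exp_le_exp.2 ?_)
    rw [norm_mul]
    exact mul_le_mul (norm_lt_of_mem_ball hs).le (hMw t ht) (norm_nonneg _) (by positivity)
  rw [norm_mul, norm_mul]
  gcongr
  · exact (norm_nonneg _).trans (hMw t ht)
  · exact hMw t ht
  · exact hMc t ht

theorem integrable_exp_neg_mul_abs {b : ℝ} (hb : 0 < b) :
    Integrable (fun x : ℝ => rexp (-b * |x|)) := by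
  rw [← integrableOn_univ, ← Iic_union_Ioi (a := 0)]
  refine IntegrableOn.union ?_ ?_
  · refine (integrableOn_exp_mul_Iic hb 0).congr_fun (fun x hx => ?_) measurableSet_Iic
    simp [abs_of_nonpos (mem_Iic.1 hx)]
  · refine (integrableOn_exp_mul_Ioi (neg_neg_of_pos hb) 0).congr_fun (fun x hx => ?_)
      measurableSet_Ioi
    rw [abs_of_pos hx]

theorem Real.exists_mul_exp_le_sinh {a : ℝ} (ha : 0 < a) :
    ∃ k > 0, ∀ t, a ≤ t → k * rexp t ≤ Real.sinh t := by
  refine ⟨(1 - rexp (-(2 * a))) / 2, ?_, fun t ht => ?_⟩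
  · have := Real.exp_lt_one_iff.2 (by linarith : -(2 * a) < 0)
    linarith
  · have : rexp (-t) ≤ rexp (-(2 * a)) * rexp t := by
      rw [← Real.exp_add]
      exact Real.exp_le_exp.2 (by linarith)
    rw [Real.sinh_eq]
    linarith

theorem Complex.sinh_ne_zero_of_norm_lt_pi {z : ℂ} (hz0 : z ≠ 0) (hz : ‖z‖ < π) :
    Complex.sinh z ≠ 0 := by
  intro h
  have hsin : Complex.sin (z * Complex.I) = 0 := by rw [Complex.sin_mul_I, h, zero_mul]
  obtain ⟨k, hk⟩ := Complex.sin_eq_zero_iff.1 hsin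
  have hk0 : k ≠ 0 := by rintro rfl; simp_all
  have hnorm : ‖z‖ = |(k : ℝ)| * π := by
    simpa [abs_of_pos pi_pos] using congrArg norm hk
  have : (1 : ℝ) ≤ |(k : ℝ)| := by exact_mod_cast Int.one_le_abs hk0
  nlinarith [pi_pos]

noncomputable def qdDenom (r : ℕ) (w : ℂ) : ℂ :=
  4 * w * Complex.sinh (π * w) * Complex.sinh (2 * π * w / r)

@[fun_prop]
theorem continuous_qdDenom (r : ℕ) : Continuous (qdDenom r) := by
  unfold qdDenom; fun_prop

theorem norm_qdDenom_ofReal (r : ℕ) (x : ℝ) :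
    ‖qdDenom r x‖ = 4 * |x| * Real.sinh (π * |x|) * Real.sinh (2 * π * |x| / r) := by
  have : qdDenom r x = ((4 * x * Real.sinh (π * x) * Real.sinh (2 * π * x / r) : ℝ) : ℂ) := by
    simp [qdDenom]
  rw [this, Complex.norm_real, Real.norm_eq_abs]
  simp [abs_mul, abs_div, Real.abs_sinh, abs_of_pos pi_pos, mul_div_assoc]

theorem qdDenom_ne_zero {r : ℕ} (hr : 2 ≤ r) {w : ℂ} (hw0 : w ≠ 0) (hw1 : ‖w‖ < 1) :
    qdDenom r w ≠ 0 := by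
  have hr0 : (0 : ℝ) < r := by positivity
  have hr2 : (2 : ℝ) ≤ r := by exact_mod_cast hr
  refine mul_ne_zero (mul_ne_zero (mul_ne_zero (by norm_num) hw0) ?_) ?_
  · refine Complex.sinh_ne_zero_of_norm_lt_pi (by simp [pi_ne_zero, hw0]) ?_
    rw [norm_mul, Complex.norm_real, Real.norm_eq_abs, abs_of_pos pi_pos]
    nlinarith [pi_pos]
  · refine Complex.sinh_ne_zero_of_norm_lt_pi (by simp [pi_ne_zero, hw0]; omega) ?_
    rw [norm_div, norm_mul, norm_mul, Complex.norm_real, Real.norm_eq_abs, abs_of_pos pi_pos,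
      Complex.norm_natCast, div_lt_iff₀ hr0]
    norm_num
    nlinarith [pi_pos]

theorem exists_mul_exp_le_norm_qdDenom {r : ℕ} (hr : 0 < r) {ε : ℝ} (hε : 0 < ε) :
    ∃ k > 0, ∀ x : ℝ, ε ≤ |x| →
      k * |x| * rexp ((π + 2 * π / r) * |x|) ≤ ‖qdDenom r x‖ := by
  obtain ⟨k₁, hk₁, h₁⟩ := Real.exists_mul_exp_le_sinh (by positivity : 0 < π * ε)
  obtain ⟨k₂, hk₂, h₂⟩ := Real.exists_mul_exp_le_sinh (by positivity : 0 < 2 * π * ε / r)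
  refine ⟨4 * k₁ * k₂, by positivity, fun x hx => ?_⟩
  rw [norm_qdDenom_ofReal, show (π + 2 * π / r) * |x| = π * |x| + 2 * π * |x| / r by ring,
    Real.exp_add]
  calc 4 * k₁ * k₂ * |x| * (rexp (π * |x|) * rexp (2 * π * |x| / r))
      = 4 * |x| * (k₁ * rexp (π * |x|)) * (k₂ * rexp (2 * π * |x| / r)) := by ring
    _ ≤ _ := by gcongr; exacts [h₁ _ (by gcongr), h₂ _ (by gcongr)]

-- The pieces of `qdContour`, as functions of `s = 2z - π`.
noncomputable def qdTail (r : ℕ) (S : Set ℝ) (s : ℂ) : ℂ :=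
  ∫ x in S, cexp (s * x) * (qdDenom r x)⁻¹

noncomputable def qdArc (r : ℕ) (ε : ℝ) (s : ℂ) : ℂ :=
  ∫ t in Ioc 0 π, cexp (s * circleMap 0 ε (π - t)) *
    ((qdDenom r (circleMap 0 ε (π - t)))⁻¹ * (-Complex.I * circleMap 0 ε (π - t)))

theorem differentiableAt_qdTail {r : ℕ} (hr : 0 < r) {ε : ℝ} (hε : 0 < ε) {S : Set ℝ}
    (hS : MeasurableSet S) (hSε : ∀ x ∈ S, ε ≤ |x|) {s₀ : ℂ} (hs₀ : |s₀.re| < π + 2 * π / r) :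
    DifferentiableAt ℂ (qdTail r S) s₀ := by
  obtain ⟨k, hk, hD⟩ := exists_mul_exp_le_norm_qdDenom hr hε
  set δ := (π + 2 * π / r - |s₀.re|) / 2
  have hδ : 0 < δ := by simp only [δ]; linarith
  have hS_ae : ∀ᵐ x ∂volume.restrict S, ε ≤ |x| := ae_restrict_of_forall_mem hS hSε
  refine differentiableAt_integral_cexp_mul hδ hε (by fun_prop)
    (Measurable.aestronglyMeasurable (by fun_prop)) (by simpa using hS_ae)
    ((integrable_exp_neg_mul_abs hδ).const_mul k⁻¹).integrableOn ?_
  filter_upwards [hS_ae] with x hx s hs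
  have hx0 : 0 < |x| := hε.trans_le hx
  have hre : |s.re| ≤ π + 2 * π / r - δ := by
    have := (Complex.abs_re_le_norm (s - s₀)).trans (mem_ball_iff_norm.1 hs).le
    rw [Complex.sub_re] at this
    simp only [δ] at this ⊢
    linarith [abs_sub_abs_le_abs_sub s.re s₀.re]
  calc ‖(x : ℂ) * (cexp (s * x) * (qdDenom r x)⁻¹)‖
      = |x| * rexp (s.re * x) / ‖qdDenom r x‖ := by
        simp [Complex.norm_exp, div_eq_mul_inv, mul_assoc]
    _ ≤ |x| * rexp (|s.re| * |x|) / (k * |x| * rexp ((π + 2 * π / r) * |x|)) := by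
        gcongr |x| * rexp ?_ / ?_
        · rw [← abs_mul]; exact le_abs_self _
        · exact hD x hx
    _ = k⁻¹ * rexp ((|s.re| - (π + 2 * π / r)) * |x|) := by
        rw [sub_mul, Real.exp_sub]; field_simp
    _ ≤ k⁻¹ * rexp (-δ * |x|) := by
        gcongr
        linarith

theorem differentiable_qdArc {r : ℕ} (hr : 2 ≤ r) {ε : ℝ} (hε : 0 < ε) (hε1 : ε < 1) :
    Differentiable ℂ (qdArc r ε) := by
  have hnorm (t : ℝ) : ‖circleMap 0 ε (π - t)‖ = ε := by
    rw [norm_circleMap_zero, abs_of_pos hε]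
  have hD (t : ℝ) : qdDenom r (circleMap 0 ε (π - t)) ≠ 0 :=
    qdDenom_ne_zero hr (norm_pos_iff.1 (by rw [hnorm]; exact hε)) (by rw [hnorm]; exact hε1)
  refine differentiable_integral_Ioc_cexp_mul hε (by fun_prop) ?_ (fun t _ => (hnorm t).ge)
  exact (((by fun_prop : Continuous fun t : ℝ => qdDenom r (circleMap 0 ε (π - t))).inv₀ hD).mul
    (by fun_prop)).continuousOn

theorem qdContour_eq_qdTail_add_qdArc_add_qdTail (r : ℕ) (ε : ℝ) (z : ℂ) :
    qdContour r ε z = qdTail r (Iic (-ε)) (2 * z - π) + qdArc r ε (2 * z - π) +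
      qdTail r (Ici ε) (2 * z - π) := by
  simp only [qdContour, qdTail, qdArc, qdInt, qdDenom, div_eq_mul_inv, integral_of_le pi_pos.le,
    circleMap, zero_add, Complex.ofReal_sub]
  congr 3 with t
  ring_nf

theorem qdPhi_differentiableOn_general (r : ℕ) (hr3 : 3 ≤ r)
    (ε : ℝ) (hε : ε ∈ Set.Ioo (0 : ℝ) 1) :
    DifferentiableOn ℂ (qdPhi r ε)
      {z : ℂ | -Real.pi / r < z.re ∧ z.re < Real.pi + Real.pi / r} := by
  obtain ⟨hε0, hε1⟩ := hε
  set L : ℂ → ℂ := fun s => qdTail r (Iic (-ε)) s + qdArc r ε s + qdTail r (Ici ε) s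
  have hφ : qdPhi r ε = fun z => 4 * π * Complex.I / r * L (2 * z - π) := by
    funext z
    rw [qdPhi, qdContour_eq_qdTail_add_qdArc_add_qdTail]
  rintro z ⟨hz₁, hz₂⟩
  have hs : |(2 * z - π).re| < π + 2 * π / r := by
    have hre : (2 * z - π).re = 2 * z.re - π := by simp
    rw [hre, abs_lt]
    rw [neg_div] at hz₁
    constructor <;> linarith [show 2 * π / r = 2 * (π / r) by ring]
  have hL : DifferentiableAt ℂ L (2 * z - π) :=
    ((differentiableAt_qdTail (by omega) hε0 measurableSet_Iic
        (fun x hx => le_abs.2 (Or.inr (le_neg_of_le_neg hx))) hs).add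
      (differentiable_qdArc (by omega) hε0 hε1 _)).add
    (differentiableAt_qdTail (by omega) hε0 measurableSet_Ici (fun x hx => le_abs.2 (Or.inl hx)) hs)
  rw [hφ]
  exact ((hL.comp z (by fun_prop : DifferentiableAt ℂ (fun z : ℂ => 2 * z - (π : ℂ)) z)).const_mul
    _).differentiableWithinAt

theorem qdPhi_differentiableOn (r : ℕ) (hr3 : 3 ≤ r) (hrodd : Odd r)
    (ε : ℝ) (hε : ε ∈ Set.Ioo (0 : ℝ) 1) :
    DifferentiableOn ℂ (qdPhi r ε)
      {z : ℂ | -Real.pi / r < z.re ∧ z.re < Real.pi + Real.pi / r} :=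
  qdPhi_differentiableOn_general r hr3 ε hε
end

section
/- Let u₁,…,u₆ be nonzero complex numbers and let z be a nonzero complex number with A·z² + B·z + C = 0, and suppose 1 − z·m ≠ 0 for each of the eight monomials m ∈ {1, u₁u₂u₄u₅, u₁u₃u₄u₆, u₂u₃u₅u₆, u₁u₂u₃, u₁u₅u₆, u₂u₄u₆, u₃u₄u₅}. Define S(z) = z/(1−z) + z·u₁u₂u₄u₅/(1−z·u₁u₂u₄u₅) + z·u₁u₃u₄u₆/(1−z·u₁u₃u₄u₆) + z·u₂u₃u₅u₆/(1−z·u₂u₃u₅u₆) − z·u₁u₂u₃/(1−z·u₁u₂u₃) − z·u₁u₅u₆/(1−z·u₁u₅u₆) − z·u₂u₄u₆/(1−z·u₂u₄u₆) − z·u₃u₄u₅/(1−z·u₃u₄u₅). Then N(z)·S(z) = z·u₁u₂u₃u₄u₅u₆·(3A·z² + 2B·z + C), where N(z) = (1−z·u₁u₂u₃)(1−z·u₁u₅u₆)(1−z·u₂u₄u₆)(1−z·u₃u₄u₅). -/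
/-- The coefficient `A` of the critical point equation of the 6j-symbol potential. -/
noncomputable def qA (u₁ u₂ u₃ u₄ u₅ u₆ : ℂ) : ℂ :=
  u₁*u₄ + u₂*u₅ + u₃*u₆ - u₁*u₂*u₆ - u₁*u₃*u₅ - u₂*u₃*u₄ - u₄*u₅*u₆ + u₁*u₂*u₃*u₄*u₅*u₆

/-- The coefficient `B` of the critical point equation of the 6j-symbol potential. -/
noncomputable def qB (u₁ u₂ u₃ u₄ u₅ u₆ : ℂ) : ℂ :=
  -((u₁ - u₁⁻¹) * (u₄ - u₄⁻¹)) - (u₂ - u₂⁻¹) * (u₅ - u₅⁻¹) - (u₃ - u₃⁻¹) * (u₆ - u₆⁻¹)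

/-- The coefficient `C` of the critical point equation of the 6j-symbol potential. -/
noncomputable def qC (u₁ u₂ u₃ u₄ u₅ u₆ : ℂ) : ℂ :=
  (u₁*u₄)⁻¹ + (u₂*u₅)⁻¹ + (u₃*u₆)⁻¹ - (u₁*u₂*u₆)⁻¹ - (u₁*u₃*u₅)⁻¹ - (u₂*u₃*u₄)⁻¹
    - (u₄*u₅*u₆)⁻¹ + (u₁*u₂*u₃*u₄*u₅*u₆)⁻¹

/-- The numerator `M(z) = (1−z)(1−zu₁u₂u₄u₅)(1−zu₁u₃u₄u₆)(1−zu₂u₃u₅u₆)`. -/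
noncomputable def qM (u₁ u₂ u₃ u₄ u₅ u₆ z : ℂ) : ℂ :=
  (1 - z) * (1 - z*u₁*u₂*u₄*u₅) * (1 - z*u₁*u₃*u₄*u₆) * (1 - z*u₂*u₃*u₅*u₆)

/-- The denominator `N(z) = (1−zu₁u₂u₃)(1−zu₁u₅u₆)(1−zu₂u₄u₆)(1−zu₃u₄u₅)`. -/
noncomputable def qN (u₁ u₂ u₃ u₄ u₅ u₆ z : ℂ) : ℂ :=
  (1 - z*u₁*u₂*u₃) * (1 - z*u₁*u₅*u₆) * (1 - z*u₂*u₄*u₆) * (1 - z*u₃*u₄*u₅)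

/-- The sum `S(z)` appearing in `∂²U/∂ξ²` at the critical point (up to the factor `−4`). -/
noncomputable def qS (u₁ u₂ u₃ u₄ u₅ u₆ z : ℂ) : ℂ :=
  z / (1 - z) + z*u₁*u₂*u₄*u₅ / (1 - z*u₁*u₂*u₄*u₅) + z*u₁*u₃*u₄*u₆ / (1 - z*u₁*u₃*u₄*u₆)
    + z*u₂*u₃*u₅*u₆ / (1 - z*u₂*u₃*u₅*u₆)
    - z*u₁*u₂*u₃ / (1 - z*u₁*u₂*u₃) - z*u₁*u₅*u₆ / (1 - z*u₁*u₅*u₆)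
    - z*u₂*u₄*u₆ / (1 - z*u₂*u₄*u₆) - z*u₃*u₄*u₅ / (1 - z*u₃*u₄*u₅)


set_option maxHeartbeats 2000000 in
/-- `-z M'(z)`. -/
lemma qUB (u₁ u₂ u₃ u₄ u₅ u₆ : ℂ)
    (h₁ : u₁ ≠ 0) (h₂ : u₂ ≠ 0) (h₃ : u₃ ≠ 0) (h₄ : u₄ ≠ 0) (h₅ : u₅ ≠ 0) (h₆ : u₆ ≠ 0) :
    (u₁*u₂*u₃*u₄*u₅*u₆) * qB u₁ u₂ u₃ u₄ u₅ u₆ =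
      -(u₁^2*u₂*u₃*u₄^2*u₅*u₆ - u₁^2*u₂*u₃*u₅*u₆ - u₂*u₃*u₄^2*u₅*u₆ + u₂*u₃*u₅*u₆)
      - (u₁*u₂^2*u₃*u₄*u₅^2*u₆ - u₁*u₂^2*u₃*u₄*u₆ - u₁*u₃*u₄*u₅^2*u₆ + u₁*u₃*u₄*u₆)
      - (u₁*u₂*u₃^2*u₄*u₅*u₆^2 - u₁*u₂*u₃^2*u₄*u₅ - u₁*u₂*u₄*u₅*u₆^2 + u₁*u₂*u₄*u₅) := by
  have e₁ := mul_inv_cancel₀ h₁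
  have e₂ := mul_inv_cancel₀ h₂
  have e₃ := mul_inv_cancel₀ h₃
  have e₄ := mul_inv_cancel₀ h₄
  have e₅ := mul_inv_cancel₀ h₅
  have e₆ := mul_inv_cancel₀ h₆
  simp only [qB]
  linear_combination
    u₁^2*u₂*u₃*u₅*u₆*e₄ + u₂*u₃*u₄^2*u₅*u₆*e₁ - u₂*u₃*u₅*u₆*((u₁*u₁⁻¹)*e₄ + e₁)
    + u₁*u₂^2*u₃*u₄*u₆*e₅ + u₁*u₃*u₄*u₅^2*u₆*e₂ - u₁*u₃*u₄*u₆*((u₂*u₂⁻¹)*e₅ + e₂)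
    + u₁*u₂*u₃^2*u₄*u₅*e₆ + u₁*u₂*u₄*u₅*u₆^2*e₃ - u₁*u₂*u₄*u₅*((u₃*u₃⁻¹)*e₆ + e₃)

set_option maxHeartbeats 2000000 in
lemma qUC (u₁ u₂ u₃ u₄ u₅ u₆ : ℂ)
    (h₁ : u₁ ≠ 0) (h₂ : u₂ ≠ 0) (h₃ : u₃ ≠ 0) (h₄ : u₄ ≠ 0) (h₅ : u₅ ≠ 0) (h₆ : u₆ ≠ 0) :
    (u₁*u₂*u₃*u₄*u₅*u₆) * qC u₁ u₂ u₃ u₄ u₅ u₆ =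
      u₂*u₃*u₅*u₆ + u₁*u₃*u₄*u₆ + u₁*u₂*u₄*u₅ - u₃*u₄*u₅ - u₂*u₄*u₆ - u₁*u₅*u₆
        - u₁*u₂*u₃ + 1 := by
  have e₁ := mul_inv_cancel₀ h₁
  have e₂ := mul_inv_cancel₀ h₂
  have e₃ := mul_inv_cancel₀ h₃
  have e₄ := mul_inv_cancel₀ h₄
  have e₅ := mul_inv_cancel₀ h₅
  have e₆ := mul_inv_cancel₀ h₆
  simp only [qC, mul_inv]
  linear_combination
    u₂*u₃*u₅*u₆*((u₁*u₁⁻¹)*e₄ + e₁)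
    + u₁*u₃*u₄*u₆*((u₂*u₂⁻¹)*e₅ + e₂)
    + u₁*u₂*u₄*u₅*((u₃*u₃⁻¹)*e₆ + e₃)
    - u₃*u₄*u₅*((u₁*u₁⁻¹*(u₂*u₂⁻¹))*e₆ + (u₁*u₁⁻¹)*e₂ + e₁)
    - u₂*u₄*u₆*((u₁*u₁⁻¹*(u₃*u₃⁻¹))*e₅ + (u₁*u₁⁻¹)*e₃ + e₁)
    - u₁*u₅*u₆*((u₂*u₂⁻¹*(u₃*u₃⁻¹))*e₄ + (u₂*u₂⁻¹)*e₃ + e₂)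
    - u₁*u₂*u₃*((u₄*u₄⁻¹*(u₅*u₅⁻¹))*e₆ + (u₄*u₄⁻¹)*e₅ + e₄)
    + ((u₁*u₁⁻¹*(u₂*u₂⁻¹)*(u₃*u₃⁻¹)*(u₄*u₄⁻¹)*(u₅*u₅⁻¹))*e₆
       + (u₁*u₁⁻¹*(u₂*u₂⁻¹)*(u₃*u₃⁻¹)*(u₄*u₄⁻¹))*e₅
       + (u₁*u₁⁻¹*(u₂*u₂⁻¹)*(u₃*u₃⁻¹))*e₄
       + (u₁*u₁⁻¹*(u₂*u₂⁻¹))*e₃ + (u₁*u₁⁻¹)*e₂ + e₁)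

/-- `-z M'(z)` type sum for the numerator factors. -/
noncomputable def qDM (u₁ u₂ u₃ u₄ u₅ u₆ z : ℂ) : ℂ :=
    z * ((1 - z*u₁*u₂*u₄*u₅) * (1 - z*u₁*u₃*u₄*u₆) * (1 - z*u₂*u₃*u₅*u₆))
  + z*u₁*u₂*u₄*u₅ * ((1 - z) * (1 - z*u₁*u₃*u₄*u₆) * (1 - z*u₂*u₃*u₅*u₆))
  + z*u₁*u₃*u₄*u₆ * ((1 - z) * (1 - z*u₁*u₂*u₄*u₅) * (1 - z*u₂*u₃*u₅*u₆))
  + z*u₂*u₃*u₅*u₆ * ((1 - z) * (1 - z*u₁*u₂*u₄*u₅) * (1 - z*u₁*u₃*u₄*u₆))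

noncomputable def qDN (u₁ u₂ u₃ u₄ u₅ u₆ z : ℂ) : ℂ :=
    z*u₁*u₂*u₃ * ((1 - z*u₁*u₅*u₆) * (1 - z*u₂*u₄*u₆) * (1 - z*u₃*u₄*u₅))
  + z*u₁*u₅*u₆ * ((1 - z*u₁*u₂*u₃) * (1 - z*u₂*u₄*u₆) * (1 - z*u₃*u₄*u₅))
  + z*u₂*u₄*u₆ * ((1 - z*u₁*u₂*u₃) * (1 - z*u₁*u₅*u₆) * (1 - z*u₃*u₄*u₅))
  + z*u₃*u₄*u₅ * ((1 - z*u₁*u₂*u₃) * (1 - z*u₁*u₅*u₆) * (1 - z*u₂*u₄*u₆))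

set_option maxHeartbeats 4000000 in
/-- `N(z) = M(z) + zU(Az² + Bz + C)`. -/
lemma qN_eq_qM_add (u₁ u₂ u₃ u₄ u₅ u₆ : ℂ)
    (h₁ : u₁ ≠ 0) (h₂ : u₂ ≠ 0) (h₃ : u₃ ≠ 0) (h₄ : u₄ ≠ 0) (h₅ : u₅ ≠ 0) (h₆ : u₆ ≠ 0)
    (z : ℂ) :
    qN u₁ u₂ u₃ u₄ u₅ u₆ z = qM u₁ u₂ u₃ u₄ u₅ u₆ z
      + z * (u₁*u₂*u₃*u₄*u₅*u₆) *
        (qA u₁ u₂ u₃ u₄ u₅ u₆ * z ^ 2 + qB u₁ u₂ u₃ u₄ u₅ u₆ * z + qC u₁ u₂ u₃ u₄ u₅ u₆) := by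
  have e : z * (u₁*u₂*u₃*u₄*u₅*u₆) *
        (qA u₁ u₂ u₃ u₄ u₅ u₆ * z ^ 2 + qB u₁ u₂ u₃ u₄ u₅ u₆ * z + qC u₁ u₂ u₃ u₄ u₅ u₆)
      = z * (((u₁*u₂*u₃*u₄*u₅*u₆) * qA u₁ u₂ u₃ u₄ u₅ u₆) * z ^ 2
          + ((u₁*u₂*u₃*u₄*u₅*u₆) * qB u₁ u₂ u₃ u₄ u₅ u₆) * z
          + (u₁*u₂*u₃*u₄*u₅*u₆) * qC u₁ u₂ u₃ u₄ u₅ u₆) := by ring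
  rw [e, qUB u₁ u₂ u₃ u₄ u₅ u₆ h₁ h₂ h₃ h₄ h₅ h₆, qUC u₁ u₂ u₃ u₄ u₅ u₆ h₁ h₂ h₃ h₄ h₅ h₆]
  simp only [qA, qM, qN]
  ring

set_option maxHeartbeats 4000000 in
/-- derivative identity: `DM − DN = zU(3Az² + 2Bz + C)`. -/
lemma qDM_sub_qDN (u₁ u₂ u₃ u₄ u₅ u₆ : ℂ)
    (h₁ : u₁ ≠ 0) (h₂ : u₂ ≠ 0) (h₃ : u₃ ≠ 0) (h₄ : u₄ ≠ 0) (h₅ : u₅ ≠ 0) (h₆ : u₆ ≠ 0)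
    (z : ℂ) :
    qDM u₁ u₂ u₃ u₄ u₅ u₆ z - qDN u₁ u₂ u₃ u₄ u₅ u₆ z
      = z * (u₁*u₂*u₃*u₄*u₅*u₆) *
        (3 * qA u₁ u₂ u₃ u₄ u₅ u₆ * z ^ 2 + 2 * qB u₁ u₂ u₃ u₄ u₅ u₆ * z
          + qC u₁ u₂ u₃ u₄ u₅ u₆) := by
  have e : z * (u₁*u₂*u₃*u₄*u₅*u₆) *
        (3 * qA u₁ u₂ u₃ u₄ u₅ u₆ * z ^ 2 + 2 * qB u₁ u₂ u₃ u₄ u₅ u₆ * z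
          + qC u₁ u₂ u₃ u₄ u₅ u₆)
      = z * (3 * ((u₁*u₂*u₃*u₄*u₅*u₆) * qA u₁ u₂ u₃ u₄ u₅ u₆) * z ^ 2
          + 2 * ((u₁*u₂*u₃*u₄*u₅*u₆) * qB u₁ u₂ u₃ u₄ u₅ u₆) * z
          + (u₁*u₂*u₃*u₄*u₅*u₆) * qC u₁ u₂ u₃ u₄ u₅ u₆) := by ring
  rw [e, qUB u₁ u₂ u₃ u₄ u₅ u₆ h₁ h₂ h₃ h₄ h₅ h₆, qUC u₁ u₂ u₃ u₄ u₅ u₆ h₁ h₂ h₃ h₄ h₅ h₆]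
  simp only [qA, qDM, qDN]
  ring

lemma div_term (d r x : ℂ) (hd : d ≠ 0) : (d * r) * (x / d) = x * r := by
  field_simp

set_option maxHeartbeats 2000000 in
lemma qM_mul_SM (u₁ u₂ u₃ u₄ u₅ u₆ z : ℂ)
    (hm1 : 1 - z ≠ 0) (hm2 : 1 - z*u₁*u₂*u₄*u₅ ≠ 0) (hm3 : 1 - z*u₁*u₃*u₄*u₆ ≠ 0)
    (hm4 : 1 - z*u₂*u₃*u₅*u₆ ≠ 0) :
    qM u₁ u₂ u₃ u₄ u₅ u₆ z *
      (z / (1 - z) + z*u₁*u₂*u₄*u₅ / (1 - z*u₁*u₂*u₄*u₅) + z*u₁*u₃*u₄*u₆ / (1 - z*u₁*u₃*u₄*u₆)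
        + z*u₂*u₃*u₅*u₆ / (1 - z*u₂*u₃*u₅*u₆))
      = qDM u₁ u₂ u₃ u₄ u₅ u₆ z := by
  have t1 : qM u₁ u₂ u₃ u₄ u₅ u₆ z * (z / (1 - z))
      = z * ((1 - z*u₁*u₂*u₄*u₅) * (1 - z*u₁*u₃*u₄*u₆) * (1 - z*u₂*u₃*u₅*u₆)) := by
    have := div_term (1 - z)
      ((1 - z*u₁*u₂*u₄*u₅) * (1 - z*u₁*u₃*u₄*u₆) * (1 - z*u₂*u₃*u₅*u₆)) z hm1
    rw [qM, ← this]; ring_nf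
  have t2 : qM u₁ u₂ u₃ u₄ u₅ u₆ z * (z*u₁*u₂*u₄*u₅ / (1 - z*u₁*u₂*u₄*u₅))
      = z*u₁*u₂*u₄*u₅ * ((1 - z) * (1 - z*u₁*u₃*u₄*u₆) * (1 - z*u₂*u₃*u₅*u₆)) := by
    have := div_term (1 - z*u₁*u₂*u₄*u₅)
      ((1 - z) * (1 - z*u₁*u₃*u₄*u₆) * (1 - z*u₂*u₃*u₅*u₆)) (z*u₁*u₂*u₄*u₅) hm2
    rw [qM, ← this]; ring_nf
  have t3 : qM u₁ u₂ u₃ u₄ u₅ u₆ z * (z*u₁*u₃*u₄*u₆ / (1 - z*u₁*u₃*u₄*u₆))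
      = z*u₁*u₃*u₄*u₆ * ((1 - z) * (1 - z*u₁*u₂*u₄*u₅) * (1 - z*u₂*u₃*u₅*u₆)) := by
    have := div_term (1 - z*u₁*u₃*u₄*u₆)
      ((1 - z) * (1 - z*u₁*u₂*u₄*u₅) * (1 - z*u₂*u₃*u₅*u₆)) (z*u₁*u₃*u₄*u₆) hm3
    rw [qM, ← this]; ring_nf
  have t4 : qM u₁ u₂ u₃ u₄ u₅ u₆ z * (z*u₂*u₃*u₅*u₆ / (1 - z*u₂*u₃*u₅*u₆))
      = z*u₂*u₃*u₅*u₆ * ((1 - z) * (1 - z*u₁*u₂*u₄*u₅) * (1 - z*u₁*u₃*u₄*u₆)) := by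
    have := div_term (1 - z*u₂*u₃*u₅*u₆)
      ((1 - z) * (1 - z*u₁*u₂*u₄*u₅) * (1 - z*u₁*u₃*u₄*u₆)) (z*u₂*u₃*u₅*u₆) hm4
    rw [qM, ← this]; ring_nf
  rw [mul_add, mul_add, mul_add, t1, t2, t3, t4, qDM]

set_option maxHeartbeats 2000000 in
lemma qN_mul_SN (u₁ u₂ u₃ u₄ u₅ u₆ z : ℂ)
    (hm5 : 1 - z*u₁*u₂*u₃ ≠ 0) (hm6 : 1 - z*u₁*u₅*u₆ ≠ 0)
    (hm7 : 1 - z*u₂*u₄*u₆ ≠ 0) (hm8 : 1 - z*u₃*u₄*u₅ ≠ 0) :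
    qN u₁ u₂ u₃ u₄ u₅ u₆ z *
      (z*u₁*u₂*u₃ / (1 - z*u₁*u₂*u₃) + z*u₁*u₅*u₆ / (1 - z*u₁*u₅*u₆)
        + z*u₂*u₄*u₆ / (1 - z*u₂*u₄*u₆) + z*u₃*u₄*u₅ / (1 - z*u₃*u₄*u₅))
      = qDN u₁ u₂ u₃ u₄ u₅ u₆ z := by
  have t1 : qN u₁ u₂ u₃ u₄ u₅ u₆ z * (z*u₁*u₂*u₃ / (1 - z*u₁*u₂*u₃))
      = z*u₁*u₂*u₃ * ((1 - z*u₁*u₅*u₆) * (1 - z*u₂*u₄*u₆) * (1 - z*u₃*u₄*u₅)) := by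
    have := div_term (1 - z*u₁*u₂*u₃)
      ((1 - z*u₁*u₅*u₆) * (1 - z*u₂*u₄*u₆) * (1 - z*u₃*u₄*u₅)) (z*u₁*u₂*u₃) hm5
    rw [qN, ← this]; ring_nf
  have t2 : qN u₁ u₂ u₃ u₄ u₅ u₆ z * (z*u₁*u₅*u₆ / (1 - z*u₁*u₅*u₆))
      = z*u₁*u₅*u₆ * ((1 - z*u₁*u₂*u₃) * (1 - z*u₂*u₄*u₆) * (1 - z*u₃*u₄*u₅)) := by
    have := div_term (1 - z*u₁*u₅*u₆)
      ((1 - z*u₁*u₂*u₃) * (1 - z*u₂*u₄*u₆) * (1 - z*u₃*u₄*u₅)) (z*u₁*u₅*u₆) hm6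
    rw [qN, ← this]; ring_nf
  have t3 : qN u₁ u₂ u₃ u₄ u₅ u₆ z * (z*u₂*u₄*u₆ / (1 - z*u₂*u₄*u₆))
      = z*u₂*u₄*u₆ * ((1 - z*u₁*u₂*u₃) * (1 - z*u₁*u₅*u₆) * (1 - z*u₃*u₄*u₅)) := by
    have := div_term (1 - z*u₂*u₄*u₆)
      ((1 - z*u₁*u₂*u₃) * (1 - z*u₁*u₅*u₆) * (1 - z*u₃*u₄*u₅)) (z*u₂*u₄*u₆) hm7
    rw [qN, ← this]; ring_nf
  have t4 : qN u₁ u₂ u₃ u₄ u₅ u₆ z * (z*u₃*u₄*u₅ / (1 - z*u₃*u₄*u₅))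
      = z*u₃*u₄*u₅ * ((1 - z*u₁*u₂*u₃) * (1 - z*u₁*u₅*u₆) * (1 - z*u₂*u₄*u₆)) := by
    have := div_term (1 - z*u₃*u₄*u₅)
      ((1 - z*u₁*u₂*u₃) * (1 - z*u₁*u₅*u₆) * (1 - z*u₂*u₄*u₆)) (z*u₃*u₄*u₅) hm8
    rw [qN, ← this]; ring_nf
  rw [mul_add, mul_add, mul_add, t1, t2, t3, t4, qDN]

set_option maxHeartbeats 2000000 in
theorem qN_mul_qS (u₁ u₂ u₃ u₄ u₅ u₆ : ℂ)
    (h₁ : u₁ ≠ 0) (h₂ : u₂ ≠ 0) (h₃ : u₃ ≠ 0) (h₄ : u₄ ≠ 0) (h₅ : u₅ ≠ 0) (h₆ : u₆ ≠ 0)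
    (z : ℂ) (hz : z ≠ 0)
    (hquad : qA u₁ u₂ u₃ u₄ u₅ u₆ * z ^ 2 + qB u₁ u₂ u₃ u₄ u₅ u₆ * z + qC u₁ u₂ u₃ u₄ u₅ u₆ = 0)
    (hm1 : 1 - z * 1 ≠ 0) (hm2 : 1 - z*u₁*u₂*u₄*u₅ ≠ 0) (hm3 : 1 - z*u₁*u₃*u₄*u₆ ≠ 0)
    (hm4 : 1 - z*u₂*u₃*u₅*u₆ ≠ 0) (hm5 : 1 - z*u₁*u₂*u₃ ≠ 0) (hm6 : 1 - z*u₁*u₅*u₆ ≠ 0)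
    (hm7 : 1 - z*u₂*u₄*u₆ ≠ 0) (hm8 : 1 - z*u₃*u₄*u₅ ≠ 0) :
    qN u₁ u₂ u₃ u₄ u₅ u₆ z * qS u₁ u₂ u₃ u₄ u₅ u₆ z =
      z * (u₁*u₂*u₃*u₄*u₅*u₆) *
        (3 * qA u₁ u₂ u₃ u₄ u₅ u₆ * z ^ 2 + 2 * qB u₁ u₂ u₃ u₄ u₅ u₆ * z + qC u₁ u₂ u₃ u₄ u₅ u₆) := by
  rw [mul_one] at hm1
  have hM0 : qM u₁ u₂ u₃ u₄ u₅ u₆ z ≠ 0 := by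
    unfold qM
    exact mul_ne_zero (mul_ne_zero (mul_ne_zero hm1 hm2) hm3) hm4
  have h1 : qN u₁ u₂ u₃ u₄ u₅ u₆ z = qM u₁ u₂ u₃ u₄ u₅ u₆ z := by
    rw [qN_eq_qM_add u₁ u₂ u₃ u₄ u₅ u₆ h₁ h₂ h₃ h₄ h₅ h₆ z, hquad, mul_zero, add_zero]
  apply mul_left_cancel₀ hM0
  calc qM u₁ u₂ u₃ u₄ u₅ u₆ z * (qN u₁ u₂ u₃ u₄ u₅ u₆ z * qS u₁ u₂ u₃ u₄ u₅ u₆ z)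
      = qN u₁ u₂ u₃ u₄ u₅ u₆ z *
          (qM u₁ u₂ u₃ u₄ u₅ u₆ z *
            (z / (1 - z) + z*u₁*u₂*u₄*u₅ / (1 - z*u₁*u₂*u₄*u₅)
              + z*u₁*u₃*u₄*u₆ / (1 - z*u₁*u₃*u₄*u₆) + z*u₂*u₃*u₅*u₆ / (1 - z*u₂*u₃*u₅*u₆)))
        - qM u₁ u₂ u₃ u₄ u₅ u₆ z *
          (qN u₁ u₂ u₃ u₄ u₅ u₆ z *
            (z*u₁*u₂*u₃ / (1 - z*u₁*u₂*u₃) + z*u₁*u₅*u₆ / (1 - z*u₁*u₅*u₆)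
              + z*u₂*u₄*u₆ / (1 - z*u₂*u₄*u₆) + z*u₃*u₄*u₅ / (1 - z*u₃*u₄*u₅))) := by
        simp only [qS]; ring
    _ = qN u₁ u₂ u₃ u₄ u₅ u₆ z * qDM u₁ u₂ u₃ u₄ u₅ u₆ z
        - qM u₁ u₂ u₃ u₄ u₅ u₆ z * qDN u₁ u₂ u₃ u₄ u₅ u₆ z := by
        rw [qM_mul_SM u₁ u₂ u₃ u₄ u₅ u₆ z hm1 hm2 hm3 hm4,
            qN_mul_SN u₁ u₂ u₃ u₄ u₅ u₆ z hm5 hm6 hm7 hm8]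
    _ = qM u₁ u₂ u₃ u₄ u₅ u₆ z *
          (qDM u₁ u₂ u₃ u₄ u₅ u₆ z - qDN u₁ u₂ u₃ u₄ u₅ u₆ z) := by rw [h1]; ring
    _ = _ := by rw [qDM_sub_qDN u₁ u₂ u₃ u₄ u₅ u₆ h₁ h₂ h₃ h₄ h₅ h₆ z]
end

section
/- Let u₁,…,u₆ be nonzero complex numbers and let z be a nonzero complex number with A·z² + B·z + C = 0, and suppose 1 − z·m ≠ 0 for each of the eight monomials m ∈ {1, u₁u₂u₄u₅, u₁u₃u₄u₆, u₂u₃u₅u₆, u₁u₂u₃, u₁u₅u₆, u₂u₄u₆, u₃u₄u₅}. With S(z) and N(z) as below, ( N(z)·S(z) / (z²·u₁u₂u₃u₄u₅u₆) )² = B² − 4AC. -/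
/-! With `U = u₁⋯u₆`, the quadratic is built so that `N − M = z U (A z² + B z + C)`; hence
`M(z) = N(z)` at a root. `S` is a difference of logarithmic derivatives, `S = z N'/N − z M'/M`,
so at a root `N S = z (N − M)'(z) = z² U (2 A z + B)`, and `(2 A z + B)² = B² − 4 A C`. -/

open Polynomial

section LogDerivative

variable {K : Type*} [Field K]

noncomputable def prodOneSub (ms : List K) : K[X] :=
  (ms.map fun m => 1 - C m * X).prod

theorem eval_prodOneSub_mul_sum (ms : List K) {z : K} (h : ∀ m ∈ ms, 1 - z * m ≠ 0) :
    (prodOneSub ms).eval z * (ms.map fun m => z * m / (1 - z * m)).sum =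
      -(z * (derivative (prodOneSub ms)).eval z) := by
  induction ms with
  | nil => simp [prodOneSub]
  | cons m ms ih =>
    obtain ⟨hm, hms⟩ := List.forall_mem_cons.1 h
    have hq := ih hms
    simp only [prodOneSub, List.map_cons, List.prod_cons, List.sum_cons] at hq ⊢
    generalize (ms.map fun m => 1 - C m * X).prod = q at hq ⊢
    simp only [derivative_mul, derivative_sub, derivative_one, derivative_C, derivative_X,
      eval_mul, eval_add, eval_sub, eval_one, eval_C, eval_X, eval_zero]
    have hdiv : (1 - z * m) * (z * m / (1 - z * m)) = z * m := mul_div_cancel₀ _ hm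
    linear_combination (1 - z * m) * hq + eval z q * hdiv

end LogDerivative

theorem eval_derivative_X_mul_quadratic {R : Type*} [CommRing R] {a b c z : R}
    (h : a * z ^ 2 + b * z + c = 0) :
    (derivative (X * (C a * X ^ 2 + C b * X + C c))).eval z = z * (2 * a * z + b) := by
  simp only [derivative_mul, derivative_add, derivative_X, derivative_C, derivative_X_pow,
    eval_add, eval_mul, eval_C, eval_pow, eval_X, eval_one, eval_zero]
  linear_combination h

section SixJ

variable (u₁ u₂ u₃ u₄ u₅ u₆ : ℂ)

def numMonomials : List ℂ := [1, u₁*u₂*u₄*u₅, u₁*u₃*u₄*u₆, u₂*u₃*u₅*u₆]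

def denMonomials : List ℂ := [u₁*u₂*u₃, u₁*u₅*u₆, u₂*u₄*u₆, u₃*u₄*u₅]

theorem eval_prodOneSub_numMonomials (z : ℂ) :
    (prodOneSub (numMonomials u₁ u₂ u₃ u₄ u₅ u₆)).eval z = qM u₁ u₂ u₃ u₄ u₅ u₆ z := by
  simp only [prodOneSub, numMonomials, qM, List.map_cons, List.map_nil, List.prod_cons,
    List.prod_nil, eval_mul, eval_sub, eval_one, eval_X, eval_C]
  ring

theorem eval_prodOneSub_denMonomials (z : ℂ) :
    (prodOneSub (denMonomials u₁ u₂ u₃ u₄ u₅ u₆)).eval z = qN u₁ u₂ u₃ u₄ u₅ u₆ z := by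
  simp only [prodOneSub, denMonomials, qN, List.map_cons, List.map_nil, List.prod_cons,
    List.prod_nil, eval_mul, eval_sub, eval_one, eval_X, eval_C]
  ring

theorem qS_eq_sum_sub_sum (z : ℂ) :
    qS u₁ u₂ u₃ u₄ u₅ u₆ z =
      ((numMonomials u₁ u₂ u₃ u₄ u₅ u₆).map fun m => z * m / (1 - z * m)).sum -
        ((denMonomials u₁ u₂ u₃ u₄ u₅ u₆).map fun m => z * m / (1 - z * m)).sum := by
  simp only [qS, numMonomials, denMonomials, List.map_cons, List.map_nil, List.sum_cons,
    List.sum_nil]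
  ring

variable {u₁ u₂ u₃ u₄ u₅ u₆}

theorem prod_mul_qB (h₁ : u₁ ≠ 0) (h₂ : u₂ ≠ 0) (h₃ : u₃ ≠ 0) (h₄ : u₄ ≠ 0) (h₅ : u₅ ≠ 0)
    (h₆ : u₆ ≠ 0) :
    u₁*u₂*u₃*u₄*u₅*u₆ * qB u₁ u₂ u₃ u₄ u₅ u₆ =
      -((u₁^2-1)*(u₄^2-1)*(u₂*u₃*u₅*u₆)) - (u₂^2-1)*(u₅^2-1)*(u₁*u₃*u₄*u₆)
        - (u₃^2-1)*(u₆^2-1)*(u₁*u₂*u₄*u₅) := by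
  unfold qB
  field_simp

theorem prod_mul_qC (h₁ : u₁ ≠ 0) (h₂ : u₂ ≠ 0) (h₃ : u₃ ≠ 0) (h₄ : u₄ ≠ 0) (h₅ : u₅ ≠ 0)
    (h₆ : u₆ ≠ 0) :
    u₁*u₂*u₃*u₄*u₅*u₆ * qC u₁ u₂ u₃ u₄ u₅ u₆ =
      1 - u₁*u₂*u₃ - u₁*u₅*u₆ - u₂*u₄*u₆ - u₃*u₄*u₅ + u₁*u₂*u₄*u₅ + u₁*u₃*u₄*u₆
        + u₂*u₃*u₅*u₆ := by
  unfold qC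
  field_simp
  ring

theorem prodOneSub_den_sub_num (h₁ : u₁ ≠ 0) (h₂ : u₂ ≠ 0) (h₃ : u₃ ≠ 0) (h₄ : u₄ ≠ 0)
    (h₅ : u₅ ≠ 0) (h₆ : u₆ ≠ 0) :
    prodOneSub (denMonomials u₁ u₂ u₃ u₄ u₅ u₆) - prodOneSub (numMonomials u₁ u₂ u₃ u₄ u₅ u₆) =
      X * (C (u₁*u₂*u₃*u₄*u₅*u₆ * qA u₁ u₂ u₃ u₄ u₅ u₆) * X ^ 2
        + C (u₁*u₂*u₃*u₄*u₅*u₆ * qB u₁ u₂ u₃ u₄ u₅ u₆) * X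
        + C (u₁*u₂*u₃*u₄*u₅*u₆ * qC u₁ u₂ u₃ u₄ u₅ u₆)) := by
  rw [prod_mul_qB h₁ h₂ h₃ h₄ h₅ h₆, prod_mul_qC h₁ h₂ h₃ h₄ h₅ h₆]
  simp only [prodOneSub, denMonomials, numMonomials, qA, List.map_cons, List.map_nil,
    List.prod_cons, List.prod_nil, map_add, map_sub, map_mul, map_neg, map_pow, map_one]
  ring

theorem qM_eq_qN_of_quadratic_eq_zero (h₁ : u₁ ≠ 0) (h₂ : u₂ ≠ 0) (h₃ : u₃ ≠ 0) (h₄ : u₄ ≠ 0)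
    (h₅ : u₅ ≠ 0) (h₆ : u₆ ≠ 0) {z : ℂ}
    (hquad : qA u₁ u₂ u₃ u₄ u₅ u₆ * z ^ 2 + qB u₁ u₂ u₃ u₄ u₅ u₆ * z + qC u₁ u₂ u₃ u₄ u₅ u₆ = 0) :
    qM u₁ u₂ u₃ u₄ u₅ u₆ z = qN u₁ u₂ u₃ u₄ u₅ u₆ z := by
  have hdiff := congrArg (eval z) (prodOneSub_den_sub_num h₁ h₂ h₃ h₄ h₅ h₆)
  simp only [eval_sub, eval_prodOneSub_numMonomials, eval_prodOneSub_denMonomials, eval_mul,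
    eval_add, eval_pow, eval_X, eval_C] at hdiff
  linear_combination -hdiff - z * (u₁*u₂*u₃*u₄*u₅*u₆) * hquad

theorem qN_mul_qS_of_quadratic_eq_zero (h₁ : u₁ ≠ 0) (h₂ : u₂ ≠ 0) (h₃ : u₃ ≠ 0) (h₄ : u₄ ≠ 0)
    (h₅ : u₅ ≠ 0) (h₆ : u₆ ≠ 0) {z : ℂ}
    (hquad : qA u₁ u₂ u₃ u₄ u₅ u₆ * z ^ 2 + qB u₁ u₂ u₃ u₄ u₅ u₆ * z + qC u₁ u₂ u₃ u₄ u₅ u₆ = 0)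
    (hnum : ∀ m ∈ numMonomials u₁ u₂ u₃ u₄ u₅ u₆, 1 - z * m ≠ 0)
    (hden : ∀ m ∈ denMonomials u₁ u₂ u₃ u₄ u₅ u₆, 1 - z * m ≠ 0) :
    qN u₁ u₂ u₃ u₄ u₅ u₆ z * qS u₁ u₂ u₃ u₄ u₅ u₆ z =
      z ^ 2 * (u₁*u₂*u₃*u₄*u₅*u₆) * (2 * qA u₁ u₂ u₃ u₄ u₅ u₆ * z + qB u₁ u₂ u₃ u₄ u₅ u₆) := by
  have hM := eval_prodOneSub_mul_sum _ hnum
  have hN := eval_prodOneSub_mul_sum _ hden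
  rw [eval_prodOneSub_numMonomials, qM_eq_qN_of_quadratic_eq_zero h₁ h₂ h₃ h₄ h₅ h₆ hquad] at hM
  rw [eval_prodOneSub_denMonomials] at hN
  have hroot : u₁*u₂*u₃*u₄*u₅*u₆ * qA u₁ u₂ u₃ u₄ u₅ u₆ * z ^ 2
      + u₁*u₂*u₃*u₄*u₅*u₆ * qB u₁ u₂ u₃ u₄ u₅ u₆ * z + u₁*u₂*u₃*u₄*u₅*u₆ * qC u₁ u₂ u₃ u₄ u₅ u₆
      = 0 := by
    linear_combination u₁*u₂*u₃*u₄*u₅*u₆ * hquad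
  have hderiv :=
    congrArg (fun p => (derivative p).eval z) (prodOneSub_den_sub_num h₁ h₂ h₃ h₄ h₅ h₆)
  simp only [derivative_sub, eval_sub, eval_derivative_X_mul_quadratic hroot] at hderiv
  rw [qS_eq_sum_sub_sum]
  linear_combination hM - hN + z * hderiv

end SixJ

theorem qN_mul_qS_sq (u₁ u₂ u₃ u₄ u₅ u₆ : ℂ)
    (h₁ : u₁ ≠ 0) (h₂ : u₂ ≠ 0) (h₃ : u₃ ≠ 0) (h₄ : u₄ ≠ 0) (h₅ : u₅ ≠ 0) (h₆ : u₆ ≠ 0)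
    (z : ℂ) (hz : z ≠ 0)
    (hquad : qA u₁ u₂ u₃ u₄ u₅ u₆ * z ^ 2 + qB u₁ u₂ u₃ u₄ u₅ u₆ * z + qC u₁ u₂ u₃ u₄ u₅ u₆ = 0)
    (hm1 : 1 - z * 1 ≠ 0) (hm2 : 1 - z*u₁*u₂*u₄*u₅ ≠ 0) (hm3 : 1 - z*u₁*u₃*u₄*u₆ ≠ 0)
    (hm4 : 1 - z*u₂*u₃*u₅*u₆ ≠ 0) (hm5 : 1 - z*u₁*u₂*u₃ ≠ 0) (hm6 : 1 - z*u₁*u₅*u₆ ≠ 0)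
    (hm7 : 1 - z*u₂*u₄*u₆ ≠ 0) (hm8 : 1 - z*u₃*u₄*u₅ ≠ 0) :
    (qN u₁ u₂ u₃ u₄ u₅ u₆ z * qS u₁ u₂ u₃ u₄ u₅ u₆ z / (z ^ 2 * (u₁*u₂*u₃*u₄*u₅*u₆))) ^ 2 =
      qB u₁ u₂ u₃ u₄ u₅ u₆ ^ 2 - 4 * qA u₁ u₂ u₃ u₄ u₅ u₆ * qC u₁ u₂ u₃ u₄ u₅ u₆ := by
  have hnum : ∀ m ∈ numMonomials u₁ u₂ u₃ u₄ u₅ u₆, 1 - z * m ≠ 0 := by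
    simp only [numMonomials, List.forall_mem_cons, List.not_mem_nil, IsEmpty.forall_iff,
      implies_true, and_true, ← mul_assoc]
    exact ⟨hm1, hm2, hm3, hm4⟩
  have hden : ∀ m ∈ denMonomials u₁ u₂ u₃ u₄ u₅ u₆, 1 - z * m ≠ 0 := by
    simp only [denMonomials, List.forall_mem_cons, List.not_mem_nil, IsEmpty.forall_iff,
      implies_true, and_true, ← mul_assoc]
    exact ⟨hm5, hm6, hm7, hm8⟩
  have hU : z ^ 2 * (u₁*u₂*u₃*u₄*u₅*u₆) ≠ 0 := by positivity
  rw [qN_mul_qS_of_quadratic_eq_zero h₁ h₂ h₃ h₄ h₅ h₆ hquad hnum hden, mul_div_cancel_left₀ _ hU,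
    ← discrim]
  exact (discrim_eq_sq_of_quadratic_eq_zero (by linear_combination hquad)).symm
end
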